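/- arXiv:2104.03585 — 4 statements merged into one kernel-verified Lean document; each statement's English description precedes it below -/
import Mathlib

section
/- Let (X, 𝒜, μ) be a non-atomic probability space, 𝒯 a tree in 𝒜, and M_𝒯 the associated dyadic maximal operator. Let f, M₁, M₂ be real numbers with M₁ ≥ f > M₂ ≥ 0. Then for every measurable φ : X → [0,∞) with ∫_X φ dμ = f, ‖φ‖_∞ = M₁ and essinf_X φ = M₂, one has ∫_X M_𝒯φ dμ ≤ f + (f − M₂)·log((M₁ − M₂)/(f − M₂)). -/
/-!
By the layer-cake formula, `∫ M_𝒯 φ = ∫₀^∞ μ {M_𝒯 φ > t} dt`. The integrand is at most `1`, and it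
vanishes for `t > M₁` because every average of `φ` is at most `‖φ‖_∞`. For `t ≥ f` the maximal
tree sets on which `φ` has average `> t` are pairwise almost disjoint and cover `{M_𝒯 φ > t}`;
on each of them `∫ (φ - M₂) ≥ (t - M₂) μ`, so `μ {M_𝒯 φ > t} ≤ (f - M₂) / (t - M₂)`. Integrating
these bounds over `(0, f]` and `[f, M₁]` gives `f + (f - M₂) log ((M₁ - M₂) / (f - M₂))`.
-/

open MeasureTheory Filter Set

noncomputable section

/-- The generations of a tree: generation 0 is `{univ}`, and generation `n+1`
consists of the children (via `C`) of elements of generation `n`. -/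
def treeGen {X : Type*} (C : Set X → Set (Set X)) : ℕ → Set (Set X)
  | 0 => {Set.univ}
  | n + 1 => ⋃ I ∈ treeGen C n, C I

/-- `T` is a tree on the measure space `(X, μ)` with child assignment `C`. -/
structure IsTree {X : Type*} [MeasurableSpace X] (μ : Measure X)
    (T : Set (Set X)) (C : Set X → Set (Set X)) : Prop where
  univ_mem : Set.univ ∈ T
  meas : ∀ I ∈ T, MeasurableSet I
  pos : ∀ I ∈ T, 0 < μ I
  child_sub : ∀ I ∈ T, C I ⊆ T
  child_countable : ∀ I ∈ T, (C I).Countable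
  child_nontrivial : ∀ I ∈ T, ∃ J ∈ C I, ∃ J' ∈ C I, J ≠ J'
  child_almost_disjoint : ∀ I ∈ T, ∀ J ∈ C I, ∀ J' ∈ C I, J ≠ J' → μ (J ∩ J') = 0
  child_cover : ∀ I ∈ T, I = ⋃₀ C I
  eq_iUnion_gen : T = ⋃ n, treeGen C n
  tendsto_gen : Filter.Tendsto (fun n => ⨆ I ∈ treeGen C n, μ I) Filter.atTop (nhds 0)

/-- The dyadic maximal operator associated with the tree `T`. -/
def maxOp {X : Type*} [MeasurableSpace X] (μ : Measure X) (T : Set (Set X))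
    (φ : X → ℝ) (x : X) : ℝ :=
  sSup {r : ℝ | ∃ I ∈ T, x ∈ I ∧ r = (∫ y in I, |φ y| ∂μ) / (μ I).toReal}


theorem mem_treeGen_succ {X : Type*} {C : Set X → Set (Set X)} {J : Set X} {n : ℕ} :
    J ∈ treeGen C (n + 1) ↔ ∃ I ∈ treeGen C n, J ∈ C I := by
  simp [treeGen]

/-- The maximal members of `{I ∈ T | P I}`. -/
def stoppingSets {X : Type*} (C : Set X → Set (Set X)) (P : Set X → Prop) : Set (Set X) :=
  {I | ∃ n, I ∈ treeGen C n ∧ P I ∧ ∀ m < n, ∀ K ∈ treeGen C m, I ⊆ K → ¬ P K}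

namespace IsTree

variable {X : Type*} [MeasurableSpace X] {μ : Measure X} {T : Set (Set X)}
  {C : Set X → Set (Set X)}

theorem treeGen_subset (hT : IsTree μ T C) (n : ℕ) : treeGen C n ⊆ T :=
  hT.eq_iUnion_gen ▸ subset_iUnion (treeGen C) n

theorem exists_mem_treeGen (hT : IsTree μ T C) {I : Set X} (hI : I ∈ T) :
    ∃ n, I ∈ treeGen C n :=
  mem_iUnion.1 (hT.eq_iUnion_gen ▸ hI)

theorem subset_of_mem_child (hT : IsTree μ T C) {I J : Set X} (hI : I ∈ T) (hJ : J ∈ C I) :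
    J ⊆ I :=
  (hT.child_cover I hI).symm ▸ subset_sUnion_of_mem hJ

theorem countable_treeGen (hT : IsTree μ T C) (n : ℕ) : (treeGen C n).Countable := by
  induction n with
  | zero => exact countable_singleton _
  | succ n ih =>
    exact ih.biUnion fun I hI => hT.child_countable I (hT.treeGen_subset n hI)

theorem countable (hT : IsTree μ T C) : T.Countable :=
  hT.eq_iUnion_gen ▸ countable_iUnion hT.countable_treeGen

theorem measure_inter_eq_zero_of_mem_treeGen (hT : IsTree μ T C) {n : ℕ} {J K : Set X}
    (hJ : J ∈ treeGen C n) (hK : K ∈ treeGen C n) (hne : J ≠ K) : μ (J ∩ K) = 0 := by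
  induction n generalizing J K with
  | zero => exact absurd ((mem_singleton_iff.1 hJ).trans (mem_singleton_iff.1 hK).symm) hne
  | succ n ih =>
    obtain ⟨I, hI, hJI⟩ := mem_treeGen_succ.1 hJ
    obtain ⟨I', hI', hKI'⟩ := mem_treeGen_succ.1 hK
    by_cases h : I = I'
    · subst h
      exact hT.child_almost_disjoint I (hT.treeGen_subset n hI) J hJI K hKI' hne
    · exact measure_mono_null
        (inter_subset_inter (hT.subset_of_mem_child (hT.treeGen_subset n hI) hJI)
          (hT.subset_of_mem_child (hT.treeGen_subset n hI') hKI')) (ih hI hI' h)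

theorem exists_superset_mem_treeGen (hT : IsTree μ T C) {m n : ℕ} (hmn : m ≤ n) {J : Set X}
    (hJ : J ∈ treeGen C n) : ∃ K ∈ treeGen C m, J ⊆ K := by
  induction n, hmn using Nat.le_induction generalizing J with
  | base => exact ⟨J, hJ, subset_rfl⟩
  | succ n _ ih =>
    obtain ⟨I, hI, hJI⟩ := mem_treeGen_succ.1 hJ
    obtain ⟨K, hK, hIK⟩ := ih hI
    exact ⟨K, hK, (hT.subset_of_mem_child (hT.treeGen_subset n hI) hJI).trans hIK⟩

theorem subset_or_measure_inter_eq_zero (hT : IsTree μ T C) {m n : ℕ} (hmn : m ≤ n)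
    {I J : Set X} (hI : I ∈ treeGen C m) (hJ : J ∈ treeGen C n) : J ⊆ I ∨ μ (J ∩ I) = 0 := by
  obtain ⟨K, hK, hJK⟩ := hT.exists_superset_mem_treeGen hmn hJ
  obtain rfl | hne := eq_or_ne K I
  · exact Or.inl hJK
  · exact Or.inr (measure_mono_null (inter_subset_inter_left I hJK)
      (hT.measure_inter_eq_zero_of_mem_treeGen hK hI hne))

theorem stoppingSets_subset (hT : IsTree μ T C) (P : Set X → Prop) : stoppingSets C P ⊆ T :=
  fun _ ⟨n, hI, _⟩ => hT.treeGen_subset n hI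

theorem exists_mem_stoppingSets_superset (hT : IsTree μ T C) {P : Set X → Prop} {I : Set X}
    (hI : I ∈ T) (hPI : P I) : ∃ J ∈ stoppingSets C P, I ⊆ J := by
  classical
  obtain ⟨n, hIn⟩ := hT.exists_mem_treeGen hI
  have hex : ∃ m, ∃ K ∈ treeGen C m, I ⊆ K ∧ P K := ⟨n, I, hIn, subset_rfl, hPI⟩
  obtain ⟨K, hK, hIK, hPK⟩ := Nat.find_spec hex
  refine ⟨K, ⟨Nat.find hex, hK, hPK, fun m hm K' hK' hKK' hPK' => ?_⟩, hIK⟩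
  exact Nat.find_min hex hm ⟨K', hK', hIK.trans hKK', hPK'⟩

theorem pairwise_aedisjoint_stoppingSets (hT : IsTree μ T C) (P : Set X → Prop) :
    (stoppingSets C P).Pairwise (AEDisjoint μ) := by
  have key : ∀ {J K : Set X} {n m : ℕ}, n ≤ m → J ∈ treeGen C n → P J → K ∈ treeGen C m →
      (∀ m' < m, ∀ K' ∈ treeGen C m', K ⊆ K' → ¬ P K') → J ≠ K → AEDisjoint μ J K := by
    intro J K n m hnm hJ hPJ hK hKmax hne
    rcases hT.subset_or_measure_inter_eq_zero hnm hJ hK with hKJ | hnull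
    · obtain rfl | hlt := hnm.eq_or_lt
      · exact hT.measure_inter_eq_zero_of_mem_treeGen hJ hK hne
      · exact absurd hPJ (hKmax n hlt J hJ hKJ)
    · rwa [AEDisjoint, inter_comm]
  rintro J ⟨n, hJ, hPJ, hJmax⟩ K ⟨m, hK, hPK, hKmax⟩ hne
  rcases le_total n m with hnm | hmn
  · exact key hnm hJ hPJ hK hKmax hne
  · exact (key hmn hK hPK hJ hJmax hne.symm).symm

end IsTree

theorem mul_measure_sUnion_le_lintegral {X : Type*} [MeasurableSpace X] {μ : Measure X}
    {S : Set (Set X)} (hS : S.Countable) (hmeas : ∀ J ∈ S, NullMeasurableSet J μ)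
    (hdisj : S.Pairwise (AEDisjoint μ)) {c : ENNReal} {ψ : X → ENNReal}
    (h : ∀ J ∈ S, c * μ J ≤ ∫⁻ x in J, ψ x ∂μ) : c * μ (⋃₀ S) ≤ ∫⁻ x, ψ x ∂μ :=
  calc c * μ (⋃₀ S) = ∑' J : S, c * μ J := by
        rw [measure_sUnion₀ hS hdisj hmeas, ENNReal.tsum_mul_left]
    _ ≤ ∑' J : S, ∫⁻ x in J, ψ x ∂μ := ENNReal.tsum_le_tsum fun J => h J J.2
    _ = ∫⁻ x in ⋃ J ∈ S, J, ψ x ∂μ := (lintegral_biUnion₀ hS hmeas hdisj ψ).symm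
    _ ≤ ∫⁻ x, ψ x ∂μ := setLIntegral_le_lintegral _ _

section MaximalOperator

variable {X : Type*} [MeasurableSpace X] {μ : Measure X} {T : Set (Set X)}
  {C : Set X → Set (Set X)} {φ : X → ℝ} {M : ℝ}

theorem setIntegral_abs_div_le {I : Set X} (hI : 0 < μ I) (hI' : μ I ≠ ⊤)
    (hφ : ∀ᵐ x ∂μ, |φ x| ≤ M) : (∫ y in I, |φ y| ∂μ) / (μ I).toReal ≤ M := by
  rw [div_le_iff₀ (ENNReal.toReal_pos hI.ne' hI')]
  have hφI : ∀ᵐ x ∂μ.restrict I, ‖|φ x|‖ ≤ M := ae_restrict_of_ae (by simpa using hφ)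
  exact (Real.le_norm_self _).trans (norm_setIntegral_le_of_norm_le_const_ae hI'.lt_top hφI)

theorem nonempty_averages (hT : IsTree μ T C) (x : X) :
    {r : ℝ | ∃ I ∈ T, x ∈ I ∧ r = (∫ y in I, |φ y| ∂μ) / (μ I).toReal}.Nonempty :=
  ⟨_, univ, hT.univ_mem, mem_univ x, rfl⟩

theorem setOf_lt_maxOp_subset (hT : IsTree μ T C) (t : ℝ) :
    {x | t < maxOp μ T φ x} ⊆ ⋃₀ {I | I ∈ T ∧ t < (∫ y in I, |φ y| ∂μ) / (μ I).toReal} := by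
  intro x hx
  obtain ⟨r, ⟨I, hI, hxI, rfl⟩, hr⟩ :=
    exists_lt_of_lt_csSup (nonempty_averages hT x) hx
  exact ⟨I, ⟨hI, hr⟩, hxI⟩

variable [IsFiniteMeasure μ]

theorem bddAbove_averages (hT : IsTree μ T C) (hφ : ∀ᵐ x ∂μ, |φ x| ≤ M) (x : X) :
    BddAbove {r : ℝ | ∃ I ∈ T, x ∈ I ∧ r = (∫ y in I, |φ y| ∂μ) / (μ I).toReal} := by
  refine ⟨M, ?_⟩
  rintro r ⟨I, hI, -, rfl⟩
  exact setIntegral_abs_div_le (hT.pos I hI) (measure_ne_top μ I) hφ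

theorem le_maxOp (hT : IsTree μ T C) (hφ : ∀ᵐ x ∂μ, |φ x| ≤ M) {x : X} {I : Set X}
    (hI : I ∈ T) (hxI : x ∈ I) : (∫ y in I, |φ y| ∂μ) / (μ I).toReal ≤ maxOp μ T φ x :=
  le_csSup (bddAbove_averages hT hφ x) ⟨I, hI, hxI, rfl⟩

theorem maxOp_le (hT : IsTree μ T C) (hφ : ∀ᵐ x ∂μ, |φ x| ≤ M) (x : X) :
    maxOp μ T φ x ≤ M :=
  csSup_le (nonempty_averages hT x) fun _ ⟨I, hI, _, hr⟩ =>
    hr ▸ setIntegral_abs_div_le (hT.pos I hI) (measure_ne_top μ I) hφ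

theorem maxOp_nonneg (hT : IsTree μ T C) (hφ : ∀ᵐ x ∂μ, |φ x| ≤ M) (x : X) :
    0 ≤ maxOp μ T φ x :=
  (div_nonneg (integral_nonneg fun _ => abs_nonneg _) ENNReal.toReal_nonneg).trans
    (le_maxOp hT hφ hT.univ_mem (mem_univ x))

theorem setOf_lt_maxOp (hT : IsTree μ T C) (hφ : ∀ᵐ x ∂μ, |φ x| ≤ M) (t : ℝ) :
    {x | t < maxOp μ T φ x} = ⋃₀ {I | I ∈ T ∧ t < (∫ y in I, |φ y| ∂μ) / (μ I).toReal} := by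
  refine (setOf_lt_maxOp_subset hT t).antisymm ?_
  rintro x ⟨I, ⟨hI, hr⟩, hxI⟩
  exact hr.trans_le (le_maxOp hT hφ hI hxI)

theorem measurable_maxOp (hT : IsTree μ T C) (hφ : ∀ᵐ x ∂μ, |φ x| ≤ M) :
    Measurable (maxOp μ T φ) := by
  refine measurable_of_Ioi fun t => ?_
  change MeasurableSet {x | t < maxOp μ T φ x}
  rw [setOf_lt_maxOp hT hφ t]
  exact .sUnion (hT.countable.mono fun I hI => hI.1) fun I hI => hT.meas I hI.1

theorem integrable_maxOp (hT : IsTree μ T C) (hφ : ∀ᵐ x ∂μ, |φ x| ≤ M) :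
    Integrable (maxOp μ T φ) μ :=
  .of_bound (measurable_maxOp hT hφ).aestronglyMeasurable M <| ae_of_all μ fun x => by
    rw [Real.norm_eq_abs, abs_of_nonneg (maxOp_nonneg hT hφ x)]
    exact maxOp_le hT hφ x

end MaximalOperator

section WeakType

variable {X : Type*} [MeasurableSpace X] {μ : Measure X} {T : Set (Set X)}
  {C : Set X → Set (Set X)} {φ : X → ℝ}

theorem ofReal_sub_mul_measure_le_setLIntegral [IsFiniteMeasure μ] {I : Set X} (hI : 0 < μ I)
    (hφ : IntegrableOn φ I μ) {c : ℝ} (hc : ∀ᵐ x ∂μ, c ≤ |φ x|) {t : ℝ} (hct : c ≤ t)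
    (ht : t < (∫ y in I, |φ y| ∂μ) / (μ I).toReal) :
    ENNReal.ofReal (t - c) * μ I ≤ ∫⁻ x in I, ENNReal.ofReal (|φ x| - c) ∂μ := by
  have hconst : IntegrableOn (fun _ => c) I μ := integrableOn_const (measure_ne_top μ I)
  have hlt : t * μ.real I < ∫ y in I, |φ y| ∂μ :=
    (lt_div_iff₀ (ENNReal.toReal_pos hI.ne' (measure_ne_top μ I))).1 ht
  calc ENNReal.ofReal (t - c) * μ I = ENNReal.ofReal ((t - c) * μ.real I) := by
        rw [ENNReal.ofReal_mul (sub_nonneg.2 hct), ofReal_measureReal (measure_ne_top μ I)]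
    _ ≤ ENNReal.ofReal (∫ x in I, (|φ x| - c) ∂μ) := by
        rw [integral_sub hφ.abs hconst, setIntegral_const, smul_eq_mul]
        exact ENNReal.ofReal_le_ofReal (by linarith)
    _ = ∫⁻ x in I, ENNReal.ofReal (|φ x| - c) ∂μ :=
        ofReal_integral_eq_lintegral_ofReal (hφ.abs.sub hconst)
          (ae_restrict_of_ae (hc.mono fun x hx => sub_nonneg.2 hx))

theorem ofReal_sub_mul_measure_lt_maxOp_le [IsFiniteMeasure μ] (hT : IsTree μ T C)
    (hφ : Integrable φ μ) {c t : ℝ} (hc : ∀ᵐ x ∂μ, c ≤ |φ x|) (hct : c ≤ t) :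
    ENNReal.ofReal (t - c) * μ {x | t < maxOp μ T φ x}
      ≤ ∫⁻ x, ENNReal.ofReal (|φ x| - c) ∂μ := by
  set P : Set X → Prop := fun I => t < (∫ y in I, |φ y| ∂μ) / (μ I).toReal
  set S := stoppingSets C P
  have hST : S ⊆ T := hT.stoppingSets_subset P
  have hSP : ∀ J ∈ S, P J := fun _ ⟨_, _, hPJ, _⟩ => hPJ
  have hcover : {x | t < maxOp μ T φ x} ⊆ ⋃₀ S := by
    refine (setOf_lt_maxOp_subset hT t).trans (sUnion_subset fun I ⟨hI, hPI⟩ => ?_)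
    obtain ⟨J, hJ, hIJ⟩ := hT.exists_mem_stoppingSets_superset (P := P) hI hPI
    exact hIJ.trans (subset_sUnion_of_mem hJ)
  calc _ ≤ ENNReal.ofReal (t - c) * μ (⋃₀ S) := by gcongr
    _ ≤ _ := mul_measure_sUnion_le_lintegral (hT.countable.mono hST)
      (fun J hJ => (hT.meas J (hST hJ)).nullMeasurableSet) (hT.pairwise_aedisjoint_stoppingSets P)
      fun J hJ => ofReal_sub_mul_measure_le_setLIntegral (hT.pos J (hST hJ)) hφ.integrableOn hc
        hct (hSP J hJ)

theorem measureReal_lt_maxOp_le [IsProbabilityMeasure μ] (hT : IsTree μ T C)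
    (hφ : Integrable φ μ) {c t : ℝ} (hc : ∀ᵐ x ∂μ, c ≤ |φ x|) (hct : c < t) :
    μ.real {x | t < maxOp μ T φ x} ≤ (∫ x, |φ x| ∂μ - c) / (t - c) := by
  have hφc : Integrable (fun x => |φ x| - c) μ := hφ.abs.sub (integrable_const c)
  have hφc_nonneg : 0 ≤ᵐ[μ] fun x => |φ x| - c := hc.mono fun x hx => sub_nonneg.2 hx
  have h := ofReal_sub_mul_measure_lt_maxOp_le hT hφ hc hct.le
  rw [← ofReal_integral_eq_lintegral_ofReal hφc hφc_nonneg, ← ofReal_measureReal,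
    ← ENNReal.ofReal_mul (sub_nonneg.2 hct.le),
    ENNReal.ofReal_le_ofReal_iff (integral_nonneg_of_ae hφc_nonneg),
    integral_sub hφ.abs (integrable_const c)] at h
  rw [le_div_iff₀ (sub_pos.2 hct)]
  simpa [mul_comm] using h

end WeakType

theorem integral_Ioi_le_add_mul_log {G : ℝ → ℝ} (hG : Antitone G) {f M₁ M₂ : ℝ}
    (hf : 0 ≤ f) (hfM₁ : f ≤ M₁) (hM₂f : M₂ < f) (hle_one : ∀ t, G t ≤ 1)
    (hle_div : ∀ t ∈ Icc f M₁, G t ≤ (f - M₂) / (t - M₂)) (hzero : ∀ t, M₁ < t → G t = 0) :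
    ∫ t in Ioi 0, G t ≤ f + (f - M₂) * Real.log ((M₁ - M₂) / (f - M₂)) := by
  have hdiv : IntervalIntegrable (fun t => (f - M₂) / (t - M₂)) volume f M₁ := by
    refine (continuousOn_const.div (continuousOn_id.sub continuousOn_const) fun t ht => ?_)
      |>.intervalIntegrable
    rw [uIcc_of_le hfM₁] at ht
    exact (sub_pos.2 (hM₂f.trans_le ht.1)).ne'
  have hlog : ∫ t in f..M₁, (f - M₂) / (t - M₂)
      = (f - M₂) * Real.log ((M₁ - M₂) / (f - M₂)) := by
    simp_rw [div_eq_mul_inv (f - M₂), intervalIntegral.integral_const_mul,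
      intervalIntegral.integral_comp_sub_right (fun t => t⁻¹),
      integral_inv_of_pos (sub_pos.2 hM₂f) (sub_pos.2 (hM₂f.trans_le hfM₁))]
  calc ∫ t in Ioi 0, G t = ∫ t in (0)..M₁, G t := by
        rw [intervalIntegral.integral_of_le (hf.trans hfM₁)]
        refine setIntegral_eq_of_subset_of_forall_sdiff_eq_zero measurableSet_Ioi
          Ioc_subset_Ioi_self fun t ht => hzero t (not_le.1 fun h => ht.2 ⟨ht.1, h⟩)
    _ = (∫ t in (0)..f, G t) + ∫ t in f..M₁, G t :=
        (intervalIntegral.integral_add_adjacent_intervals hG.intervalIntegrable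
          hG.intervalIntegrable).symm
    _ ≤ (∫ _ in (0)..f, (1 : ℝ)) + ∫ t in f..M₁, (f - M₂) / (t - M₂) :=
        add_le_add
          (intervalIntegral.integral_mono_on hf hG.intervalIntegrable intervalIntegrable_const
            fun t _ => hle_one t)
          (intervalIntegral.integral_mono_on hfM₁ hG.intervalIntegrable hdiv hle_div)
    _ = f + (f - M₂) * Real.log ((M₁ - M₂) / (f - M₂)) := by simp [hlog]

/-- Unbounded above, `essSup φ μ` would take the junk value `0` in `ℝ`. -/
theorem ae_le_essSup_of_pos {X : Type*} [MeasurableSpace X] {μ : Measure X} {φ : X → ℝ}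
    (h : 0 < essSup φ μ) : ∀ᵐ x ∂μ, φ x ≤ essSup φ μ :=
  ae_le_essSup (by_contra fun hφ => h.ne' (Real.limsup_of_not_isBoundedUnder hφ))

theorem stmt1_general {X : Type*} [MeasurableSpace X] (μ : Measure X)
    [IsProbabilityMeasure μ]
    (T : Set (Set X)) (C : Set X → Set (Set X)) (hT : IsTree μ T C)
    (f M₁ M₂ : ℝ) (h1 : M₁ ≥ f) (h2 : f > M₂) (h3 : M₂ ≥ 0)
    (φ : X → ℝ) (hnn : ∀ x, 0 ≤ φ x)
    (hint : (∫ x, φ x ∂μ) = f) (hsup : essSup φ μ = M₁) (hinf : essInf φ μ = M₂) :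
    (∫ x, maxOp μ T φ x ∂μ) ≤ f + (f - M₂) * Real.log ((M₁ - M₂) / (f - M₂)) := by
  have hf : 0 < f := h3.trans_lt h2
  have habs : ∀ x, |φ x| = φ x := fun x => abs_of_nonneg (hnn x)
  have hφ : Integrable φ μ := by
    by_contra h
    rw [integral_undef h] at hint
    exact hf.ne hint
  have hbd : ∀ᵐ x ∂μ, |φ x| ≤ M₁ := by
    have h := ae_le_essSup_of_pos (μ := μ) (φ := φ) (hsup ▸ hf.trans_le h1)
    rw [hsup] at h
    simpa only [habs] using h
  have hlb : ∀ᵐ x ∂μ, M₂ ≤ |φ x| := by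
    have h := ae_essInf_le (μ := μ) (f := φ) ⟨0, eventually_map.2 (ae_of_all μ hnn)⟩
    rw [hinf] at h
    simpa only [habs] using h
  rw [(integrable_maxOp hT hbd).integral_eq_integral_meas_lt
    (ae_of_all μ (maxOp_nonneg hT hbd))]
  refine integral_Ioi_le_add_mul_log (G := fun t => μ.real {x | t < maxOp μ T φ x})
    (fun s t hst => measureReal_mono fun x hx => hst.trans_lt hx)
    hf.le h1 h2 (fun t => measureReal_le_one) (fun t ht => ?_) (fun t ht => ?_)
  · simpa [habs, hint] using measureReal_lt_maxOp_le hT hφ hlb (h2.trans_le ht.1)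
  · have : {x | t < maxOp μ T φ x} = ∅ :=
      eq_empty_of_forall_notMem fun x hx => not_lt.2 (maxOp_le hT hbd x) (ht.trans hx)
    simp [this]

theorem stmt1 {X : Type*} [MeasurableSpace X] (μ : Measure X)
    [IsProbabilityMeasure μ] [NullSingletonClass μ]
    (T : Set (Set X)) (C : Set X → Set (Set X)) (hT : IsTree μ T C)
    (f M₁ M₂ : ℝ) (h1 : M₁ ≥ f) (h2 : f > M₂) (h3 : M₂ ≥ 0)
    (φ : X → ℝ) (hmeas : Measurable φ) (hnn : ∀ x, 0 ≤ φ x)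
    (hint : (∫ x, φ x ∂μ) = f) (hsup : essSup φ μ = M₁) (hinf : essInf φ μ = M₂) :
    (∫ x, maxOp μ T φ x ∂μ) ≤ f + (f - M₂) * Real.log ((M₁ - M₂) / (f - M₂)) :=
  stmt1_general μ T C hT f M₁ M₂ h1 h2 h3 φ hnn hint hsup hinf
end
end

section
/- Let M₁ ≥ f > M₂ ≥ 0 be real numbers. Then for every g ∈ 𝒜(M₁,f,M₂), one has I_g = ∫₀¹ ((1/t)·∫₀ᵗ g(u) du) dt ≤ f + (f − M₂)·log((M₁ − M₂)/(f − M₂)). -/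
/-!
Write `G t = ∫₀ᵗ g`. Since `M₂ ≤ g ≤ M₁`, both `G t ≤ M₁ t` and `G t = f - ∫ₜ¹ g ≤ f - M₂ (1 - t)`,
so `G t / t ≤ M₂ + min (M₁ - M₂) ((f - M₂) / t)`. Integrating this majorant, which is constant up
to `t = (f - M₂) / (M₁ - M₂)` and a multiple of `1 / t` afterwards, gives exactly the bound.
-/

open MeasureTheory Filter Set

noncomputable section

/-- `g` belongs to the class `𝒜(M₁, f, M₂)`: `g : [0,1) → [0,∞)` is decreasing,
left continuous on `(0,1)`, continuous at `0`, with `g 0 = M₁`,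
`lim_{t→1⁻} g t = M₂` and `∫₀¹ g = f`. -/
def memA (M₁ f M₂ : ℝ) (g : ℝ → ℝ) : Prop :=
  (∀ t ∈ Set.Ico (0 : ℝ) 1, 0 ≤ g t) ∧
  (∀ s ∈ Set.Ico (0 : ℝ) 1, ∀ t ∈ Set.Ico (0 : ℝ) 1, s ≤ t → g t ≤ g s) ∧
  (∀ t ∈ Set.Ioo (0 : ℝ) 1, Filter.Tendsto g (nhdsWithin t (Set.Iio t)) (nhds (g t))) ∧
  Filter.Tendsto g (nhdsWithin 0 (Set.Ioi 0)) (nhds (g 0)) ∧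
  g 0 = M₁ ∧
  Filter.Tendsto g (nhdsWithin 1 (Set.Iio 1)) (nhds M₂) ∧
  (∫ t in Set.Ioo (0 : ℝ) 1, g t) = f

/-- `I_g = ∫₀¹ ((1/t) ∫₀ᵗ g(u) du) dt`. -/
def Ig (g : ℝ → ℝ) : ℝ :=
  ∫ t in Set.Ioo (0 : ℝ) 1, (1 / t) * ∫ u in Set.Ioo (0 : ℝ) t, g u

open Topology Real Interval

lemma AntitoneOn.le_of_tendsto_nhdsLT {g : ℝ → ℝ} {a b L t : ℝ} (hg : AntitoneOn g (Ico a b))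
    (hL : Tendsto g (𝓝[<] b) (𝓝 L)) (ht : t ∈ Ico a b) : L ≤ g t := by
  refine le_of_tendsto hL ?_
  filter_upwards [Ioo_mem_nhdsLT ht.2] with u hu
  exact hg ht ⟨ht.1.trans hu.1.le, hu.2⟩ hu.1.le

lemma AntitoneOn.integrableOn_Ioo {g : ℝ → ℝ} {a b m : ℝ} (hg : AntitoneOn g (Ico a b))
    (hm : ∀ t ∈ Ico a b, m ≤ g t) : IntegrableOn g (Ioo a b) := by
  rcases le_or_gt b a with hba | hab
  · simp [Ioo_eq_empty_of_le hba]
  have hmeas : AEStronglyMeasurable g (volume.restrict (Ioo a b)) :=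
    ((aemeasurable_restrict_of_antitoneOn measurableSet_Ico hg).mono_measure
      (Measure.restrict_mono Ioo_subset_Ico_self le_rfl)).aestronglyMeasurable
  refine IntegrableOn.of_bound measure_Ioo_lt_top hmeas (max (g a) (-m)) ?_
  filter_upwards [ae_restrict_mem measurableSet_Ioo] with t ht
  have hle : g t ≤ g a := hg (left_mem_Ico.2 hab) (Ioo_subset_Ico_self ht) ht.1.le
  have hge : m ≤ g t := hm t (Ioo_subset_Ico_self ht)
  rw [Real.norm_eq_abs, abs_le]
  constructor <;> linarith [le_max_left (g a) (-m), le_max_right (g a) (-m)]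

lemma intervalIntegrable_min_div {c D : ℝ} (hc : 0 ≤ c) (hD : 0 ≤ D) :
    IntervalIntegrable (fun t => min D (c / t)) volume 0 1 := by
  have hmeas : Measurable fun t : ℝ => min D (c / t) := by fun_prop
  refine (intervalIntegrable_iff_integrableOn_Ioc_of_le zero_le_one).2
    (IntegrableOn.of_bound measure_Ioc_lt_top hmeas.aestronglyMeasurable D ?_)
  filter_upwards [ae_restrict_mem measurableSet_Ioc] with t ht
  rw [Real.norm_eq_abs, abs_of_nonneg (le_min hD (div_nonneg hc ht.1.le))]
  exact min_le_left _ _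

lemma integral_min_div {c D : ℝ} (hc : 0 < c) (hcD : c ≤ D) :
    ∫ t in (0 : ℝ)..1, min D (c / t) = c + c * log (D / c) := by
  have hD : 0 < D := hc.trans_le hcD
  set a := c / D with ha_def
  have ha : 0 < a := div_pos hc hD
  have ha1 : a ≤ 1 := (div_le_one hD).2 hcD
  have haI : a ∈ [[(0 : ℝ), 1]] := by rw [uIcc_of_le zero_le_one]; exact ⟨ha.le, ha1⟩
  have hi := intervalIntegrable_min_div hc.le hD.le
  have hleft : ∫ t in (0 : ℝ)..a, min D (c / t) = c := by
    have hcongr : EqOn (fun t => min D (c / t)) (fun _ => D) (Ioc 0 a) := fun t ht =>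
      min_eq_left ((le_div_iff₀ ht.1).2 (by rw [mul_comm]; exact (le_div_iff₀ hD).1 ht.2))
    rw [intervalIntegral.integral_of_le ha.le, setIntegral_congr_fun measurableSet_Ioc hcongr,
      setIntegral_const, Real.volume_real_Ioc_of_le ha.le, smul_eq_mul, sub_zero, ha_def,
      div_mul_cancel₀ _ hD.ne']
  have hright : ∫ t in a..1, min D (c / t) = c * log (D / c) := by
    have hcongr : EqOn (fun t => min D (c / t)) (fun t => c * t⁻¹) [[a, 1]] := by
      rw [uIcc_of_le ha1]
      intro t ht
      have hle : c / t ≤ D := (div_le_iff₀ (ha.trans_le ht.1)).2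
        (by rw [mul_comm]; exact (div_le_iff₀ hD).1 ht.1)
      exact (min_eq_right hle).trans (div_eq_mul_inv c t)
    rw [intervalIntegral.integral_congr hcongr, intervalIntegral.integral_const_mul,
      integral_inv_of_pos ha one_pos, one_div_div]
  rw [← intervalIntegral.integral_add_adjacent_intervals (hi.mono_set (uIcc_subset_uIcc_left haI))
    (hi.mono_set (uIcc_subset_uIcc_right haI)), hleft, hright]

namespace memA

variable {M₁ f M₂ : ℝ} {g : ℝ → ℝ}

lemma antitoneOn (hg : memA M₁ f M₂ g) : AntitoneOn g (Ico 0 1) :=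
  fun s hs t ht hst => hg.2.1 s hs t ht hst

lemma apply_le (hg : memA M₁ f M₂ g) {t : ℝ} (ht : t ∈ Ico 0 1) : g t ≤ M₁ :=
  hg.2.2.2.2.1 ▸ hg.antitoneOn (left_mem_Ico.2 one_pos) ht ht.1

lemma le_apply (hg : memA M₁ f M₂ g) {t : ℝ} (ht : t ∈ Ico 0 1) : M₂ ≤ g t :=
  hg.antitoneOn.le_of_tendsto_nhdsLT hg.2.2.2.2.2.1 ht

lemma intervalIntegrable (hg : memA M₁ f M₂ g) : IntervalIntegrable g volume 0 1 :=
  (intervalIntegrable_iff_integrableOn_Ioo_of_le zero_le_one).2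
    (hg.antitoneOn.integrableOn_Ioo fun _ ht => hg.le_apply ht)

lemma integral_eq (hg : memA M₁ f M₂ g) : ∫ u in (0 : ℝ)..1, g u = f := by
  rw [intervalIntegral.integral_of_le zero_le_one, integral_Ioc_eq_integral_Ioo]
  exact hg.2.2.2.2.2.2

lemma integral_le_mul (hg : memA M₁ f M₂ g) {t : ℝ} (ht : t ∈ Ico 0 1) :
    ∫ u in (0 : ℝ)..t, g u ≤ M₁ * t := by
  have htI : t ∈ [[(0 : ℝ), 1]] := Icc_subset_uIcc (Ico_subset_Icc_self ht)
  calc ∫ u in (0 : ℝ)..t, g u ≤ ∫ _ in (0 : ℝ)..t, M₁ :=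
        intervalIntegral.integral_mono_on ht.1
          (hg.intervalIntegrable.mono_set (uIcc_subset_uIcc_left htI)) intervalIntegrable_const
          fun u hu => hg.apply_le ⟨hu.1, hu.2.trans_lt ht.2⟩
    _ = M₁ * t := by simp [mul_comm]

lemma integral_le_sub_mul (hg : memA M₁ f M₂ g) {t : ℝ} (ht : t ∈ Ico 0 1) :
    ∫ u in (0 : ℝ)..t, g u ≤ f - M₂ * (1 - t) := by
  have htI : t ∈ [[(0 : ℝ), 1]] := Icc_subset_uIcc (Ico_subset_Icc_self ht)
  have hright := hg.intervalIntegrable.mono_set (uIcc_subset_uIcc_right htI)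
  have hsplit := intervalIntegral.integral_add_adjacent_intervals
    (hg.intervalIntegrable.mono_set (uIcc_subset_uIcc_left htI)) hright
  have hlow : M₂ * (1 - t) ≤ ∫ u in t..1, g u :=
    calc M₂ * (1 - t) = ∫ _ in t..1, M₂ := by simp [mul_comm]
      _ ≤ ∫ u in t..1, g u :=
        intervalIntegral.integral_mono_on_of_le_Ioo ht.2.le intervalIntegrable_const hright
          fun u hu => hg.le_apply ⟨ht.1.trans hu.1.le, hu.2⟩
  rw [hg.integral_eq] at hsplit
  linarith

lemma one_div_mul_integral_le (hg : memA M₁ f M₂ g) {t : ℝ} (ht : t ∈ Ioo 0 1) :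
    1 / t * ∫ u in Ioo 0 t, g u ≤ M₂ + min (M₁ - M₂) ((f - M₂) / t) := by
  have h₁ := hg.integral_le_mul (Ioo_subset_Ico_self ht)
  have h₂ := hg.integral_le_sub_mul (Ioo_subset_Ico_self ht)
  rw [intervalIntegral.integral_of_le ht.1.le, integral_Ioc_eq_integral_Ioo] at h₁ h₂
  rw [← min_add_add_left, le_min_iff, one_div_mul_eq_div, div_le_iff₀ ht.1, div_le_iff₀ ht.1,
    add_sub_cancel, add_mul, div_mul_cancel₀ _ ht.1.ne']
  constructor <;> linarith

end memA

theorem stmt8_general (f M₁ M₂ : ℝ) (h1 : M₁ ≥ f) (h2 : f > M₂)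
    (g : ℝ → ℝ) (hg : memA M₁ f M₂ g) :
    Ig g ≤ f + (f - M₂) * Real.log ((M₁ - M₂) / (f - M₂)) := by
  have hmaj := intervalIntegrable_min_div (sub_nonneg.2 h2.le) (by linarith : 0 ≤ M₁ - M₂)
  calc Ig g ≤ ∫ t in Ioo (0 : ℝ) 1, (M₂ + min (M₁ - M₂) ((f - M₂) / t)) := by
        -- nonnegativity of the integrand spares us its measurability
        refine integral_mono_of_nonneg ?_ ?_ ?_
        · filter_upwards [ae_restrict_mem measurableSet_Ioo] with t ht
          exact mul_nonneg (one_div_nonneg.2 ht.1.le)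
            (setIntegral_nonneg measurableSet_Ioo fun u hu => hg.1 u ⟨hu.1.le, hu.2.trans ht.2⟩)
        · exact (intervalIntegrable_iff_integrableOn_Ioo_of_le zero_le_one).1
            (intervalIntegrable_const.add hmaj)
        · filter_upwards [ae_restrict_mem measurableSet_Ioo] with t ht
          exact hg.one_div_mul_integral_le ht
    _ = M₂ + ((f - M₂) + (f - M₂) * log ((M₁ - M₂) / (f - M₂))) := by
        rw [← integral_Ioc_eq_integral_Ioo, ← intervalIntegral.integral_of_le zero_le_one,
          intervalIntegral.integral_add intervalIntegrable_const hmaj,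
          integral_min_div (sub_pos.2 h2) (by linarith)]
        simp
    _ = f + (f - M₂) * log ((M₁ - M₂) / (f - M₂)) := by ring

theorem stmt8 (f M₁ M₂ : ℝ) (h1 : M₁ ≥ f) (h2 : f > M₂) (h3 : M₂ ≥ 0)
    (g : ℝ → ℝ) (hg : memA M₁ f M₂ g) :
    Ig g ≤ f + (f - M₂) * Real.log ((M₁ - M₂) / (f - M₂)) :=
  stmt8_general f M₁ M₂ h1 h2 g hg
end
end

section
/- Let g₁, g₂ : [0,∞) → [0,∞) and 0 < k ≤ 1 be such that: (a) g₁ and g₂ are decreasing; (b) g₁(t) ≤ g₂(t) for every t ∈ [0,∞); (c) g₁ is right continuous and g₂ is left continuous; (d) lim_{t→∞} g₂(t) = 0 and g₂(0) = 1. Then there exists u ∈ [0,∞) such that g₁(u) ≤ k ≤ g₂(u). -/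
open Filter Set

theorem stmt12 (g₁ g₂ : ℝ → ℝ) (k : ℝ) (hk0 : 0 < k) (hk1 : k ≤ 1)
    (hnn₁ : ∀ t : ℝ, 0 ≤ t → 0 ≤ g₁ t) (hnn₂ : ∀ t : ℝ, 0 ≤ t → 0 ≤ g₂ t)
    (hdec₁ : ∀ s t : ℝ, 0 ≤ s → s ≤ t → g₁ t ≤ g₁ s)
    (hdec₂ : ∀ s t : ℝ, 0 ≤ s → s ≤ t → g₂ t ≤ g₂ s)
    (hle : ∀ t : ℝ, 0 ≤ t → g₁ t ≤ g₂ t)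
    (hrc : ∀ t : ℝ, 0 ≤ t →
      Filter.Tendsto g₁ (nhdsWithin t (Set.Ioi t)) (nhds (g₁ t)))
    (hlc : ∀ t : ℝ, 0 < t →
      Filter.Tendsto g₂ (nhdsWithin t (Set.Iio t)) (nhds (g₂ t)))
    (hlim : Filter.Tendsto g₂ Filter.atTop (nhds 0))
    (hg₂0 : g₂ 0 = 1) :
    ∃ u : ℝ, 0 ≤ u ∧ g₁ u ≤ k ∧ k ≤ g₂ u := by
  set S : Set ℝ := {t | 0 ≤ t ∧ k ≤ g₂ t} with hS
  have h0S : (0 : ℝ) ∈ S := ⟨le_refl 0, by rw [hg₂0]; exact hk1⟩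
  have hne : S.Nonempty := ⟨0, h0S⟩
  -- bounded above
  have hbdd : BddAbove S := by
    obtain ⟨N, hN⟩ := (hlim.eventually (gt_mem_nhds hk0)).exists_forall_of_atTop
    refine ⟨N, fun t ht => ?_⟩
    by_contra h
    push_neg at h
    exact absurd ht.2 (not_le.mpr (hN t h.le))
  set u := sSup S with hu
  have hu0 : 0 ≤ u := le_csSup hbdd h0S
  -- For all t with 0 ≤ t < u, k ≤ g₂ t
  have hlt : ∀ t : ℝ, 0 ≤ t → t < u → k ≤ g₂ t := by
    intro t ht htu
    obtain ⟨s, hsS, hts⟩ := exists_lt_of_lt_csSup hne htu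
    exact le_trans hsS.2 (hdec₂ t s ht hts.le)
  -- k ≤ g₂ u
  have hg2u : k ≤ g₂ u := by
    rcases eq_or_lt_of_le hu0 with h | h
    · rw [← h, hg₂0]; exact hk1
    · refine ge_of_tendsto (hlc u h) ?_
      have hmem : Ioo 0 u ∈ nhdsWithin u (Iio u) := by
        rw [mem_nhdsWithin]
        exact ⟨Ioi 0, isOpen_Ioi, h, fun x hx => ⟨hx.1, hx.2⟩⟩
      filter_upwards [hmem] with t ht
      exact hlt t ht.1.le ht.2
  -- g₁ u ≤ k
  have hg1u : g₁ u ≤ k := by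
    refine le_of_tendsto (hrc u hu0) ?_
    filter_upwards [self_mem_nhdsWithin] with t ht
    have htu : u < t := ht
    have ht0 : 0 ≤ t := le_trans hu0 htu.le
    have : g₂ t < k := by
      by_contra h
      push_neg at h
      exact absurd (le_csSup hbdd (show t ∈ S from ⟨ht0, h⟩)) (not_le.mpr htu)
    exact le_of_lt (lt_of_le_of_lt (hle t ht0) this)
  exact ⟨u, hu0, hg1u, hg2u⟩
end

section
/- Let (X, 𝒜, μ) be a measure space, g : X → [0,∞) a measurable integrable function, and u ≥ 0. Let D be a measurable set with {g > u} ⊂ D ⊂ {g ≥ u}. Then for every measurable set K with μ(K) = μ(D), one has ∫_K g dμ ≤ ∫_D g dμ. -/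
/-!
Shifting by the constant `u` costs the same amount `u μ(K) = u μ(D)` on both sides, so it suffices
to compare `∫_K (g - u)` with `∫_D (g - u)`; and pointwise `1_K (g - u) ≤ 1_D (g - u)`, because
`g - u ≥ 0` on `D` and `g - u ≤ 0` off `D`. The shift needs `μ(D) < ∞`, which holds by Markov when
`u > 0`; when `u = 0` the set `D` carries the whole integral of `g ≥ 0` instead.
-/

open MeasureTheory Set

section

variable {X : Type*} {g : X → ℝ} {u : ℝ} {D K : Set X}

lemma indicator_sub_le_indicator_sub_of_subset (h1 : {x | u < g x} ⊆ D)
    (h2 : D ⊆ {x | u ≤ g x}) :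
    K.indicator (fun x ↦ g x - u) ≤ D.indicator (fun x ↦ g x - u) := by
  intro x
  by_cases hxD : x ∈ D <;> by_cases hxK : x ∈ K
  all_goals simp only [indicator_of_mem, indicator_of_notMem, hxD, hxK, le_refl, not_false_eq_true]
  · exact sub_nonneg.2 (h2 hxD)
  · exact sub_nonpos.2 (not_lt.1 fun h ↦ hxD (h1 h))

variable [MeasurableSpace X] {μ : Measure X}

lemma setIntegral_sub_const (hg : IntegrableOn g K μ) (hKfin : μ K ≠ ⊤) :
    ∫ x in K, (g x - u) ∂μ = ∫ x in K, g x ∂μ - μ.real K * u := by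
  rw [integral_sub hg (integrableOn_const hKfin), setIntegral_const, smul_eq_mul]

theorem setIntegral_le_setIntegral_of_measure_eq (hD : MeasurableSet D) (hK : MeasurableSet K)
    (hgD : IntegrableOn g D μ) (hgK : IntegrableOn g K μ)
    (h1 : {x | u < g x} ⊆ D) (h2 : D ⊆ {x | u ≤ g x}) (hμ : μ K = μ D) (hDfin : μ D ≠ ⊤) :
    ∫ x in K, g x ∂μ ≤ ∫ x in D, g x ∂μ := by
  have hKfin : μ K ≠ ⊤ := hμ ▸ hDfin
  have hshift : ∫ x in K, (g x - u) ∂μ ≤ ∫ x in D, (g x - u) ∂μ := by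
    rw [← integral_indicator hK, ← integral_indicator hD]
    exact integral_mono ((hgK.sub (integrableOn_const hKfin)).integrable_indicator hK)
      ((hgD.sub (integrableOn_const hDfin)).integrable_indicator hD)
      (indicator_sub_le_indicator_sub_of_subset h1 h2)
  have hreal : μ.real K = μ.real D := by simp only [measureReal_def, hμ]
  rw [setIntegral_sub_const hgK hKfin, setIntegral_sub_const hgD hDfin, hreal] at hshift
  linarith

theorem setIntegral_le_setIntegral_of_support_subset (hg : Integrable g μ) (hnn : ∀ x, 0 ≤ g x)
    (hsupp : {x | 0 < g x} ⊆ D) : ∫ x in K, g x ∂μ ≤ ∫ x in D, g x ∂μ := by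
  rw [setIntegral_eq_integral_of_forall_compl_eq_zero fun x hx ↦
    le_antisymm (not_lt.1 fun h ↦ hx (hsupp h)) (hnn x)]
  exact setIntegral_le_integral hg (Filter.Eventually.of_forall hnn)

end

theorem stmt13_general {X : Type*} [MeasurableSpace X] (μ : Measure X)
    (g : X → ℝ) (hnn : ∀ x, 0 ≤ g x)
    (hint : Integrable g μ) (u : ℝ) (hu : 0 ≤ u)
    (D : Set X) (hD : MeasurableSet D)
    (h1 : {x | u < g x} ⊆ D) (h2 : D ⊆ {x | u ≤ g x})
    (K : Set X) (hK : MeasurableSet K) (hμ : μ K = μ D) :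
    (∫ x in K, g x ∂μ) ≤ ∫ x in D, g x ∂μ := by
  rcases hu.eq_or_lt with rfl | hu
  · exact setIntegral_le_setIntegral_of_support_subset hint hnn h1
  · have hDfin : μ D ≠ ⊤ := ((measure_mono h2).trans_lt (hint.measure_ge_lt_top hu)).ne
    exact setIntegral_le_setIntegral_of_measure_eq hD hK hint.integrableOn hint.integrableOn
      h1 h2 hμ hDfin

theorem stmt13 {X : Type*} [MeasurableSpace X] (μ : Measure X)
    (g : X → ℝ) (hmeas : Measurable g) (hnn : ∀ x, 0 ≤ g x)
    (hint : Integrable g μ) (u : ℝ) (hu : 0 ≤ u)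
    (D : Set X) (hD : MeasurableSet D)
    (h1 : {x | u < g x} ⊆ D) (h2 : D ⊆ {x | u ≤ g x})
    (K : Set X) (hK : MeasurableSet K) (hμ : μ K = μ D) :
    (∫ x in K, g x ∂μ) ≤ ∫ x in D, g x ∂μ :=
  stmt13_general μ g hnn hint u hu D hD h1 h2 K hK hμ
end
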